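/- arXiv:2211.11473 — 2 statements merged into one kernel-verified Lean document; each statement's English description precedes it below -/
import Mathlib

section
/- Let (E, F) be a resistance form on a set X whose resistance metric R is complete and such that (X,R) is doubling and uniformly perfect. Let {f_n}_{n≥0} ⊆ F satisfy ∑_{n≥0} E(f_n,f_n) < ∞. (1) If sup_{n≥0} f_n(x*) < ∞ for some x* ∈ X, then the pointwise supremum f̄ := sup_{n≥0} f_n is finite everywhere, belongs to F, and satisfies E(f̄,f̄) ≤ ∑_{n≥0} E(f_n,f_n). (2) If inf_{n≥0} f_n(x*) > −∞ for some x* ∈ X, then the pointwise infimum f := inf_{n≥0} f_n is finite everywhere, belongs to F, and satisfies E(f,f) ≤ ∑_{n≥0} E(f_n,f_n). -/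
open Filter Set Metric
open scoped ENNReal Topology

/-- A resistance form `(E, F)` on a set `X` (Kigami):
`F` is a linear subspace of the real-valued functions on `X`, `E` is a nonnegative
symmetric bilinear form on `F` such that (RF1) constants belong to `F` and
`E(u,u) = 0` iff `u` is constant, (RF2) the quotient of `F` by the constants is a
Hilbert space under `E` (stated as completeness of the `E`-seminorm on `F`),
(RF3) points of `X` are separated by `F`, (RF4) for `x ≠ y` the quantity
`R(x,y) = (inf {E(u,u) : u ∈ F, u x = 1, u y = 0})⁻¹` is finite (i.e. the infimum
is positive; an admissible `u` always exists), and (RF5) the Markov property holds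
for the unit truncation. -/
structure ResistanceForm (X : Type*) where
  F : Set (X → ℝ)
  E : (X → ℝ) → (X → ℝ) → ℝ
  zero_mem : (0 : X → ℝ) ∈ F
  add_mem : ∀ {u v : X → ℝ}, u ∈ F → v ∈ F → u + v ∈ F
  smul_mem : ∀ (c : ℝ) {u : X → ℝ}, u ∈ F → c • u ∈ F
  const_mem : ∀ c : ℝ, (fun _ => c) ∈ F
  symm : ∀ u ∈ F, ∀ v ∈ F, E u v = E v u
  add_left : ∀ u ∈ F, ∀ v ∈ F, ∀ w ∈ F, E (u + v) w = E u w + E v w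
  smul_left : ∀ (c : ℝ), ∀ u ∈ F, ∀ v ∈ F, E (c • u) v = c * E u v
  nonneg : ∀ u ∈ F, 0 ≤ E u u
  null_iff_const : ∀ u ∈ F, (E u u = 0 ↔ ∃ c : ℝ, ∀ x, u x = c)
  complete : ∀ u : ℕ → (X → ℝ), (∀ n, u n ∈ F) →
    (∀ ε : ℝ, 0 < ε → ∃ N : ℕ, ∀ m ≥ N, ∀ n ≥ N, E (u m - u n) (u m - u n) < ε) →
    ∃ v ∈ F, ∀ ε : ℝ, 0 < ε → ∃ N : ℕ, ∀ n ≥ N, E (v - u n) (v - u n) < ε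
  sep : ∀ x y : X, x ≠ y → ∃ u ∈ F, u x ≠ u y
  exists_unit : ∀ x y : X, x ≠ y → ∃ u ∈ F, u x = 1 ∧ u y = 0
  inf_pos : ∀ x y : X, x ≠ y →
    0 < sInf {e : ℝ | ∃ u ∈ F, u x = 1 ∧ u y = 0 ∧ E u u = e}
  markov : ∀ u ∈ F, (fun x => max 0 (min 1 (u x))) ∈ F ∧
    E (fun x => max 0 (min 1 (u x))) (fun x => max 0 (min 1 (u x))) ≤ E u u

namespace ResistanceForm

variable {X : Type*}

open Classical in
/-- The resistance metric `R` associated with a resistance form: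
`R(x,x) = 0` and `R(x,y) = (inf {E(u,u) : u ∈ F, u x = 1, u y = 0})⁻¹` for `x ≠ y`. -/
noncomputable def rmetric (rf : ResistanceForm X) (x y : X) : ℝ :=
  if x = y then 0
  else (sInf {e : ℝ | ∃ u ∈ rf.F, u x = 1 ∧ u y = 0 ∧ rf.E u u = e})⁻¹

open Classical in
/-- The resistance `𝓡(A,B)` between two sets: the reciprocal of the minimal energy of
functions that are `≡ 1` on `A` and `≡ 0` on `B` if such functions exist, `0` if no
such function exists, and `∞` if `A` or `B` is empty. -/
noncomputable def setRes (rf : ResistanceForm X) (A B : Set X) : ℝ≥0∞ :=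
  if A.Nonempty ∧ B.Nonempty then
    (if ∃ u ∈ rf.F, (∀ x ∈ A, u x = 1) ∧ (∀ x ∈ B, u x = 0) then
      (ENNReal.ofReal
        (sInf {e : ℝ | ∃ u ∈ rf.F, (∀ x ∈ A, u x = 1) ∧ (∀ x ∈ B, u x = 0) ∧ rf.E u u = e}))⁻¹
    else 0)
  else ⊤

end ResistanceForm

/-- A distance function `ρ` on `X` is doubling: there is `N ∈ ℕ` such that every ball of
radius `2r` is covered by `N` balls of radius `r`. -/
def DoublingOf {X : Type*} (ρ : X → X → ℝ) : Prop :=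
  ∃ N : ℕ, ∀ (x : X) (r : ℝ), ∃ s : Finset X, s.card ≤ N ∧
    {y : X | ρ x y < 2 * r} ⊆ ⋃ z ∈ s, {y : X | ρ z y < r}

/-- A distance function `ρ` on `X` is uniformly perfect: there is `γ > 1` such that
`B(x, γ r) \ B(x, r) ≠ ∅` whenever `B(x,r)` is not the whole space. -/
def UniformlyPerfectOf {X : Type*} (ρ : X → X → ℝ) : Prop :=
  ∃ γ : ℝ, 1 < γ ∧ ∀ (x : X) (r : ℝ), 0 < r → {y : X | ρ x y < r} ≠ Set.univ →
    ({y : X | ρ x y < γ * r} \ {y : X | ρ x y < r}).Nonempty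

/-!
The heart of the matter is that `F` is closed under pointwise limits of bounded energy. Given
`u n → φ` pointwise with `E(u n) ≤ S`, pick in the convex hull of each tail `{u n : n ≥ N}` an
element `W N` of nearly minimal energy; the minimal energies increase with `N`, so the
parallelogram law makes `(W N)` Cauchy for `E`, and completeness gives an `E`-limit `v`. Since
`|w x - w y|² ≤ R(x,y) E(w,w)`, the differences `W N x - W N y` converge both to
`v x - v y` and to `φ x - φ y`, so `φ` is `v` plus a constant.

Closedness and the Markov property for the truncations `max 0 (min n u)` give `E(u⁺) ≤ E(u)`.
Comparing `u⁺` with `(u⁺ - s u⁻)⁺ = u⁺` for small `s > 0` gives `E(u⁺, u⁻) ≤ 0`, and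
hence `E(u ⊔ v) ≤ E(u) + E(v)`. The partial maxima of `f n` thus have energy at most
`∑ E(f n)` and increase to `⨆ n, f n`, which is finite everywhere by the resistance estimate;
closedness concludes. The infimum is the supremum of the `-f n`.
-/

def tailHull {X : Type*} (u : ℕ → X → ℝ) (N : ℕ) : Set (X → ℝ) :=
  convexHull ℝ (u '' Ici N)

section TailHull

variable {X : Type*} {u : ℕ → X → ℝ}

theorem tailHull_antitone (u : ℕ → X → ℝ) : Antitone (tailHull u) :=
  fun _ _ hMN => convexHull_mono (image_mono (Ici_subset_Ici.2 hMN))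

theorem apply_mem_tailHull (u : ℕ → X → ℝ) (N : ℕ) : u N ∈ tailHull u N :=
  subset_convexHull ℝ _ ⟨N, mem_Ici.2 le_rfl, rfl⟩

theorem abs_sub_le_of_mem_tailHull {N : ℕ} {x : X} {L b : ℝ}
    (hb : ∀ n ≥ N, |u n x - L| ≤ b) {w : X → ℝ} (hw : w ∈ tailHull u N) :
    |w x - L| ≤ b := by
  have hball : tailHull u N ⊆ LinearMap.proj (R := ℝ) (φ := fun _ : X => ℝ) x ⁻¹'
      Metric.closedBall L b := by
    refine convexHull_min ?_ ((convex_closedBall L b).linear_preimage _)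
    rintro _ ⟨n, hn, rfl⟩
    simpa [Real.dist_eq] using hb n hn
  simpa [Real.dist_eq] using hball hw

theorem tendsto_apply_of_mem_tailHull {W : ℕ → X → ℝ} (hW : ∀ N, W N ∈ tailHull u N)
    {x : X} {L : ℝ} (hu : Tendsto (fun n => u n x) atTop (𝓝 L)) :
    Tendsto (fun N => W N x) atTop (𝓝 L) := by
  rw [Metric.tendsto_atTop] at hu ⊢
  intro ε hε
  obtain ⟨K, hK⟩ := hu (ε / 2) (half_pos hε)
  refine ⟨K, fun N hN => ?_⟩
  have hb : ∀ n ≥ N, |u n x - L| ≤ ε / 2 := fun n hn => (hK n (hN.trans hn)).le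
  rw [Real.dist_eq]
  linarith [abs_sub_le_of_mem_tailHull hb (hW N)]

end TailHull

theorem nonpos_of_forall_pos_le_mul {a b : ℝ} (h : ∀ s > 0, a ≤ s * b) : a ≤ 0 := by
  have hlim : Tendsto (fun s => s * b) (𝓝[>] 0) (𝓝 0) := by
    simpa using ((continuous_id.mul continuous_const).tendsto' 0 0 (by simp)).mono_left
      nhdsWithin_le_nhds (f := fun s : ℝ => s * b)
  exact ge_of_tendsto hlim (eventually_nhdsWithin_of_forall h)

namespace ResistanceForm

variable {X : Type*} {rf : ResistanceForm X}

section Bilinear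

variable {u v w : X → ℝ}

theorem neg_mem (hu : u ∈ rf.F) : -u ∈ rf.F := by
  simpa using rf.smul_mem (-1) hu

theorem sub_mem (hu : u ∈ rf.F) (hv : v ∈ rf.F) : u - v ∈ rf.F := by
  simpa [sub_eq_add_neg] using rf.add_mem hu (neg_mem hv)

variable (rf) in
theorem convex_F : Convex ℝ rf.F :=
  fun _ ha _ hb s t _ _ _ => rf.add_mem (rf.smul_mem s ha) (rf.smul_mem t hb)

theorem E_add_right (hu : u ∈ rf.F) (hv : v ∈ rf.F) (hw : w ∈ rf.F) :
    rf.E u (v + w) = rf.E u v + rf.E u w := by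
  rw [rf.symm u hu _ (rf.add_mem hv hw), rf.add_left v hv w hw u hu, rf.symm v hv u hu,
    rf.symm w hw u hu]

theorem E_smul_right (c : ℝ) (hu : u ∈ rf.F) (hv : v ∈ rf.F) :
    rf.E u (c • v) = c * rf.E u v := by
  rw [rf.symm u hu _ (rf.smul_mem c hv), rf.smul_left c v hv u hu, rf.symm v hv u hu]

theorem E_add_add (hu : u ∈ rf.F) (hv : v ∈ rf.F) :
    rf.E (u + v) (u + v) = rf.E u u + 2 * rf.E u v + rf.E v v := by
  rw [rf.add_left u hu v hv _ (rf.add_mem hu hv), E_add_right hu hu hv, E_add_right hv hu hv,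
    rf.symm v hv u hu]
  ring

theorem E_smul_smul (c : ℝ) (hu : u ∈ rf.F) : rf.E (c • u) (c • u) = c ^ 2 * rf.E u u := by
  rw [rf.smul_left c u hu _ (rf.smul_mem c hu), E_smul_right c hu hu]
  ring

theorem E_neg_neg (hu : u ∈ rf.F) : rf.E (-u) (-u) = rf.E u u := by
  simpa using E_smul_smul (-1) hu

theorem E_sub_sub (hu : u ∈ rf.F) (hv : v ∈ rf.F) :
    rf.E (u - v) (u - v) = rf.E u u - 2 * rf.E u v + rf.E v v := by
  rw [sub_eq_add_neg, E_add_add hu (neg_mem hv), E_neg_neg hv, ← neg_one_smul ℝ v,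
    E_smul_right _ hu hv]
  ring

theorem two_mul_E_le_add (hu : u ∈ rf.F) (hv : v ∈ rf.F) :
    2 * rf.E u v ≤ rf.E u u + rf.E v v := by
  linarith [E_sub_sub hu hv, rf.nonneg _ (sub_mem hu hv)]

theorem sq_E_le_mul (hu : u ∈ rf.F) (hv : v ∈ rf.F) :
    rf.E u v ^ 2 ≤ rf.E u u * rf.E v v := by
  have h := discrim_le_zero (a := rf.E v v) (b := 2 * rf.E u v) (c := rf.E u u) fun t => by
    have := rf.nonneg _ (rf.add_mem hu (rf.smul_mem t hv))
    rw [E_add_add hu (rf.smul_mem t hv), E_smul_right t hu hv, E_smul_smul t hv] at this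
    linarith
  rw [discrim] at h
  linarith

theorem sqrt_E_add_le (hu : u ∈ rf.F) (hv : v ∈ rf.F) :
    √(rf.E (u + v) (u + v)) ≤ √(rf.E u u) + √(rf.E v v) := by
  have hcs : rf.E u v ≤ √(rf.E u u) * √(rf.E v v) := by
    rw [← Real.sqrt_mul (rf.nonneg u hu)]
    exact Real.le_sqrt_of_sq_le (sq_E_le_mul hu hv)
  rw [Real.sqrt_le_left (by positivity), E_add_add hu hv]
  nlinarith [Real.sq_sqrt (rf.nonneg u hu), Real.sq_sqrt (rf.nonneg v hv)]

theorem E_const_right (c : ℝ) (hu : u ∈ rf.F) : rf.E u (fun _ => c) = 0 := by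
  have hc : rf.E (fun _ => c) (fun _ => c) = 0 :=
    (rf.null_iff_const _ (rf.const_mem c)).2 ⟨c, fun _ => rfl⟩
  have h := sq_E_le_mul hu (rf.const_mem c)
  rw [hc, mul_zero] at h
  exact pow_eq_zero_iff two_ne_zero |>.1 (le_antisymm h (sq_nonneg _))

theorem E_add_const (c : ℝ) (hu : u ∈ rf.F) :
    rf.E (u + fun _ => c) (u + fun _ => c) = rf.E u u := by
  rw [E_add_add hu (rf.const_mem c), E_const_right c hu,
    (rf.null_iff_const _ (rf.const_mem c)).2 ⟨c, fun _ => rfl⟩]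
  ring

theorem E_sub_sub_eq_midpoint (hu : u ∈ rf.F) (hv : v ∈ rf.F) :
    rf.E (u - v) (u - v) = 2 * rf.E u u + 2 * rf.E v v
      - 4 * rf.E ((1 / 2 : ℝ) • u + (1 / 2 : ℝ) • v) ((1 / 2 : ℝ) • u + (1 / 2 : ℝ) • v) := by
  rw [← smul_add, E_smul_smul _ (rf.add_mem hu hv), E_add_add hu hv, E_sub_sub hu hv]
  ring

end Bilinear

section Resistance

variable {u v : X → ℝ}

variable (rf) in
theorem rmetric_nonneg (x y : X) : 0 ≤ rf.rmetric x y := by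
  unfold rmetric
  split_ifs with h
  · exact le_rfl
  · exact inv_nonneg.2 (rf.inf_pos x y h).le

theorem sq_sub_le_rmetric_mul_E (hu : u ∈ rf.F) (x y : X) :
    (u x - u y) ^ 2 ≤ rf.rmetric x y * rf.E u u := by
  rcases eq_or_ne (u x) (u y) with h | h
  · rw [h, sub_self, sq, zero_mul]
    exact mul_nonneg (rf.rmetric_nonneg x y) (rf.nonneg u hu)
  have hxy : x ≠ y := fun hxy => h (congrArg u hxy)
  set c := u x - u y
  have hc : c ≠ 0 := sub_ne_zero.2 h
  -- `v` is admissible in the infimum defining `R(x,y)`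
  set v : X → ℝ := c⁻¹ • (u + fun _ => -u y)
  have hv : v ∈ rf.F := rf.smul_mem _ (rf.add_mem hu (rf.const_mem _))
  have hEv : rf.E v v = (c⁻¹) ^ 2 * rf.E u u := by
    rw [E_smul_smul _ (rf.add_mem hu (rf.const_mem _)), E_add_const _ hu]
  have hinf : sInf {e : ℝ | ∃ w ∈ rf.F, w x = 1 ∧ w y = 0 ∧ rf.E w w = e} ≤ rf.E v v := by
    refine csInf_le ⟨0, ?_⟩ ⟨v, hv, ?_, ?_, rfl⟩
    · rintro _ ⟨w, hw, -, -, rfl⟩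
      exact rf.nonneg w hw
    · simp only [v, Pi.smul_apply, Pi.add_apply, smul_eq_mul]
      field_simp
      ring
    · simp [v]
  rw [rmetric, if_neg hxy, ← div_eq_inv_mul, le_div_iff₀ (rf.inf_pos x y hxy)]
  calc c ^ 2 * sInf _ ≤ c ^ 2 * ((c⁻¹) ^ 2 * rf.E u u) := by rw [← hEv]; gcongr
    _ = rf.E u u := by field_simp

theorem tendsto_sub_of_tendsto_E {ι : Type*} {l : Filter ι} {W : ι → X → ℝ}
    (hW : ∀ i, W i ∈ rf.F) (hv : v ∈ rf.F)
    (h : Tendsto (fun i => rf.E (v - W i) (v - W i)) l (𝓝 0)) (x y : X) :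
    Tendsto (fun i => W i x - W i y) l (𝓝 (v x - v y)) := by
  rw [← tendsto_sub_nhds_zero_iff]
  have hR : Tendsto (fun i => √(rf.rmetric x y * rf.E (v - W i) (v - W i))) l (𝓝 0) := by
    simpa using ((h.const_mul (rf.rmetric x y)).sqrt)
  refine squeeze_zero_norm (fun i => ?_) hR
  rw [Real.norm_eq_abs, abs_sub_comm]
  convert Real.abs_le_sqrt (sq_sub_le_rmetric_mul_E (sub_mem hv (hW i)) x y) using 2
  simp only [Pi.sub_apply]
  ring

end Resistance

section Closedness

variable {u : ℕ → X → ℝ} {v : X → ℝ} {S : ℝ}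

theorem exists_tendsto_E_sub (hu : ∀ n, u n ∈ rf.F)
    (hcauchy : ∀ ε : ℝ, 0 < ε → ∃ N : ℕ, ∀ m ≥ N, ∀ n ≥ N, rf.E (u m - u n) (u m - u n) < ε) :
    ∃ v ∈ rf.F, Tendsto (fun n => rf.E (v - u n) (v - u n)) atTop (𝓝 0) := by
  obtain ⟨v, hv, hconv⟩ := rf.complete u hu hcauchy
  refine ⟨v, hv, Metric.tendsto_atTop.2 fun ε hε => ?_⟩
  obtain ⟨N, hN⟩ := hconv ε hε
  refine ⟨N, fun n hn => ?_⟩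
  rw [Real.dist_eq, sub_zero, abs_of_nonneg (rf.nonneg _ (sub_mem hv (hu n)))]
  exact hN n hn

theorem mem_F_and_E_eq_of_sub_eq {φ : X → ℝ} (hv : v ∈ rf.F)
    (h : ∀ x y, φ x - φ y = v x - v y) : φ ∈ rf.F ∧ rf.E φ φ = rf.E v v := by
  rcases isEmpty_or_nonempty X with _ | ⟨⟨x₀⟩⟩
  · obtain rfl : φ = v := Subsingleton.elim _ _
    exact ⟨hv, rfl⟩
  have hφ : φ = v + fun _ => φ x₀ - v x₀ :=
    funext fun x => by simp only [Pi.add_apply]; linarith [h x x₀]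
  rw [hφ]
  exact ⟨rf.add_mem hv (rf.const_mem _), E_add_const _ hv⟩

theorem E_le_of_tendsto_E_sub {ι : Type*} {l : Filter ι} [l.NeBot] {W : ι → X → ℝ}
    (hW : ∀ i, W i ∈ rf.F) (hWS : ∀ i, rf.E (W i) (W i) ≤ S) (hv : v ∈ rf.F)
    (h : Tendsto (fun i => rf.E (v - W i) (v - W i)) l (𝓝 0)) : rf.E v v ≤ S := by
  obtain ⟨i₀⟩ := l.nonempty_of_neBot
  have hS : 0 ≤ S := (rf.nonneg _ (hW i₀)).trans (hWS i₀)
  rw [← Real.sqrt_le_sqrt_iff hS]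
  refine ge_of_tendsto (by simpa using (h.sqrt.const_add √S)) (Eventually.of_forall fun i => ?_)
  calc √(rf.E v v) = √(rf.E (W i + (v - W i)) (W i + (v - W i))) := by rw [add_sub_cancel]
    _ ≤ √(rf.E (W i) (W i)) + √(rf.E (v - W i) (v - W i)) :=
      sqrt_E_add_le (hW i) (sub_mem hv (hW i))
    _ ≤ √S + √(rf.E (v - W i) (v - W i)) := by gcongr; exact hWS i

theorem convex_setOf_E_le (S : ℝ) : Convex ℝ {w | w ∈ rf.F ∧ rf.E w w ≤ S} := by
  rintro a ⟨ha, haS⟩ b ⟨hb, hbS⟩ s t hs ht hst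
  refine ⟨rf.convex_F ha hb hs ht hst, ?_⟩
  have hab := two_mul_E_le_add ha hb
  rw [E_add_add (rf.smul_mem s ha) (rf.smul_mem t hb), E_smul_smul s ha, E_smul_smul t hb,
    rf.smul_left s a ha _ (rf.smul_mem t hb), E_smul_right t ha hb]
  calc s ^ 2 * rf.E a a + 2 * (s * (t * rf.E a b)) + t ^ 2 * rf.E b b
      ≤ s ^ 2 * rf.E a a + s * t * (rf.E a a + rf.E b b) + t ^ 2 * rf.E b b := by
        nlinarith [mul_nonneg hs ht]
    _ = (s + t) * (s * rf.E a a + t * rf.E b b) := by ring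
    _ ≤ (s + t) * (s * S + t * S) := by gcongr
    _ = S := by rw [← add_mul, hst, one_mul, one_mul]

theorem tailHull_subset_F (hu : ∀ n, u n ∈ rf.F) (N : ℕ) : tailHull u N ⊆ rf.F :=
  convexHull_min (by rintro _ ⟨n, -, rfl⟩; exact hu n) rf.convex_F

theorem tailHull_subset_setOf_E_le (hu : ∀ n, u n ∈ rf.F) (hS : ∀ n, rf.E (u n) (u n) ≤ S)
    (N : ℕ) : tailHull u N ⊆ {w | w ∈ rf.F ∧ rf.E w w ≤ S} :=
  convexHull_min (by rintro _ ⟨n, -, rfl⟩; exact ⟨hu n, hS n⟩) (convex_setOf_E_le S)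

variable (rf) in
noncomputable def tailHullEnergy (u : ℕ → X → ℝ) (N : ℕ) : ℝ :=
  sInf ((fun w => rf.E w w) '' tailHull u N)

theorem tailHullEnergy_le (hu : ∀ n, u n ∈ rf.F) {N : ℕ} {w : X → ℝ}
    (hw : w ∈ tailHull u N) : rf.tailHullEnergy u N ≤ rf.E w w := by
  refine csInf_le ⟨0, ?_⟩ (mem_image_of_mem _ hw)
  rintro _ ⟨w', hw', rfl⟩
  exact rf.nonneg w' (tailHull_subset_F hu N hw')

theorem tailHullEnergy_monotone (hu : ∀ n, u n ∈ rf.F) : Monotone (rf.tailHullEnergy u) := by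
  intro M N hMN
  refine le_csInf ((nonempty_of_mem (apply_mem_tailHull u N)).image _) ?_
  rintro _ ⟨w, hw, rfl⟩
  exact tailHullEnergy_le hu (tailHull_antitone u hMN hw)

theorem exists_cauchy_of_mem_tailHull (hu : ∀ n, u n ∈ rf.F) (hS : ∀ n, rf.E (u n) (u n) ≤ S) :
    ∃ W : ℕ → X → ℝ, (∀ N, W N ∈ tailHull u N) ∧
      ∀ ε : ℝ, 0 < ε → ∃ K : ℕ, ∀ m ≥ K, ∀ n ≥ K, rf.E (W m - W n) (W m - W n) < ε := by
  set d := rf.tailHullEnergy u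
  have hd_bdd : BddAbove (range d) :=
    ⟨S, by rintro _ ⟨N, rfl⟩; exact (tailHullEnergy_le hu (apply_mem_tailHull u N)).trans (hS N)⟩
  set D := ⨆ N, d N
  have hW : ∀ N : ℕ, ∃ w ∈ tailHull u N, rf.E w w < d N + 1 / ((N : ℝ) + 1) := by
    intro N
    obtain ⟨_, ⟨w, hw, rfl⟩, hlt⟩ := exists_lt_of_csInf_lt
      ((nonempty_of_mem (apply_mem_tailHull u N)).image _)
      (lt_add_of_pos_right (d N) Nat.one_div_pos_of_nat)
    exact ⟨w, hw, hlt⟩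
  choose W hW hWd using hW
  refine ⟨W, hW, fun ε hε => ?_⟩
  have hgap : Tendsto (fun K : ℕ => 4 * (D - d K) + 4 * (1 / ((K : ℝ) + 1))) atTop (𝓝 0) := by
    have hd := tendsto_atTop_ciSup (tailHullEnergy_monotone hu) hd_bdd
    have := ((hd.const_sub D).const_mul 4).add
      (tendsto_one_div_add_atTop_nhds_zero_nat.const_mul 4)
    rwa [sub_self, mul_zero, add_zero] at this
  obtain ⟨K, hK⟩ := eventually_atTop.1 (hgap.eventually (gt_mem_nhds hε))
  refine ⟨K, fun m hm n hn => ?_⟩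
  -- the midpoint of `W m` and `W n` lies in the `K`-th tail hull, so its energy is at least `d K`
  have hmid := tailHullEnergy_le hu ((convex_convexHull ℝ _) (tailHull_antitone u hm (hW m))
    (tailHull_antitone u hn (hW n)) (by norm_num : (0 : ℝ) ≤ 1 / 2) (by norm_num : (0 : ℝ) ≤ 1 / 2)
    (by norm_num))
  have hFm := tailHull_subset_F hu m (hW m)
  have hFn := tailHull_subset_F hu n (hW n)
  have hm' : rf.E (W m) (W m) < D + 1 / ((K : ℝ) + 1) := (hWd m).trans_le
    (add_le_add (le_ciSup hd_bdd m) (Nat.one_div_le_one_div hm))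
  have hn' : rf.E (W n) (W n) < D + 1 / ((K : ℝ) + 1) := (hWd n).trans_le
    (add_le_add (le_ciSup hd_bdd n) (Nat.one_div_le_one_div hn))
  rw [E_sub_sub_eq_midpoint hFm hFn]
  linarith [hK K le_rfl]

theorem mem_F_and_E_le_of_tendsto {φ : X → ℝ} (hu : ∀ n, u n ∈ rf.F)
    (hS : ∀ n, rf.E (u n) (u n) ≤ S) (hφ : ∀ x, Tendsto (fun n => u n x) atTop (𝓝 (φ x))) :
    φ ∈ rf.F ∧ rf.E φ φ ≤ S := by
  obtain ⟨W, hW, hcauchy⟩ := exists_cauchy_of_mem_tailHull hu hS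
  have hWF : ∀ N, W N ∈ rf.F := fun N => tailHull_subset_F hu N (hW N)
  obtain ⟨v, hv, hvW⟩ := exists_tendsto_E_sub hWF hcauchy
  have hdiff : ∀ x y, φ x - φ y = v x - v y := fun x y =>
    tendsto_nhds_unique ((tendsto_apply_of_mem_tailHull hW (hφ x)).sub
      (tendsto_apply_of_mem_tailHull hW (hφ y))) (tendsto_sub_of_tendsto_E hWF hv hvW x y)
  obtain ⟨hφF, hφE⟩ := mem_F_and_E_eq_of_sub_eq hv hdiff
  exact ⟨hφF, hφE ▸ E_le_of_tendsto_E_sub hWF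
    (fun N => (tailHull_subset_setOf_E_le hu hS N (hW N)).2) hv hvW⟩

end Closedness

section Lattice

variable {u v : X → ℝ}

theorem truncation_mem_and_E_le {c : ℝ} (hc : 0 < c) (hu : u ∈ rf.F) :
    (fun x => max 0 (min c (u x))) ∈ rf.F ∧
      rf.E (fun x => max 0 (min c (u x))) (fun x => max 0 (min c (u x))) ≤ rf.E u u := by
  obtain ⟨hmem, hle⟩ := rf.markov _ (rf.smul_mem c⁻¹ hu)
  have hscale : (fun x => max 0 (min c (u x))) = c • fun x => max 0 (min 1 ((c⁻¹ • u) x)) := by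
    funext x
    simp only [Pi.smul_apply, smul_eq_mul]
    rw [mul_max_of_nonneg _ _ hc.le, mul_zero, mul_min_of_nonneg _ _ hc.le, mul_one,
      mul_inv_cancel_left₀ hc.ne']
  rw [hscale, E_smul_smul c hmem]
  refine ⟨rf.smul_mem c hmem, ?_⟩
  calc c ^ 2 * rf.E _ _ ≤ c ^ 2 * rf.E (c⁻¹ • u) (c⁻¹ • u) := by gcongr
    _ = rf.E u u := by rw [E_smul_smul _ hu]; field_simp

theorem posPart_mem_and_E_le (hu : u ∈ rf.F) : u⁺ ∈ rf.F ∧ rf.E u⁺ u⁺ ≤ rf.E u u := by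
  refine mem_F_and_E_le_of_tendsto (u := fun n x => max 0 (min ((n : ℝ) + 1) (u x)))
    (fun n => (truncation_mem_and_E_le n.cast_add_one_pos hu).1)
    (fun n => (truncation_mem_and_E_le n.cast_add_one_pos hu).2)
    fun x => tendsto_const_nhds.congr' ?_
  filter_upwards [eventually_ge_atTop ⌈u x⌉₊] with n hn
  have : u x ≤ (n : ℝ) + 1 := (Nat.le_ceil _).trans (by exact_mod_cast hn.trans n.le_succ)
  rw [min_eq_right this, Pi.posPart_apply, posPart_def, max_comm]

theorem negPart_mem (hu : u ∈ rf.F) : u⁻ ∈ rf.F := by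
  simpa only [posPart_neg] using (posPart_mem_and_E_le (neg_mem hu)).1

theorem E_posPart_negPart_nonpos (hu : u ∈ rf.F) : rf.E u⁺ u⁻ ≤ 0 := by
  have hp := (posPart_mem_and_E_le hu).1
  have hn := negPart_mem hu
  refine nonpos_of_forall_pos_le_mul (b := rf.E u⁻ u⁻ / 2) fun s hs => ?_
  -- `u⁺` and `u⁻` have disjoint supports
  have hdisj : (u⁺ - s • u⁻)⁺ = u⁺ := by
    funext x
    simp only [Pi.posPart_apply, Pi.sub_apply, Pi.smul_apply, Pi.negPart_apply, smul_eq_mul]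
    rcases le_total 0 (u x) with h | h
    · rw [negPart_eq_zero.2 h, mul_zero, sub_zero, posPart_eq_self.2 (posPart_nonneg _)]
    · rw [posPart_eq_zero.2 h, zero_sub, posPart_eq_zero.2 (neg_nonpos.2
        (mul_nonneg hs.le (negPart_nonneg _)))]
  have hle := (posPart_mem_and_E_le (sub_mem hp (rf.smul_mem s hn))).2
  rw [hdisj, E_sub_sub hp (rf.smul_mem s hn), E_smul_right s hp hn, E_smul_smul s hn] at hle
  nlinarith

theorem sup_mem_and_E_le (hu : u ∈ rf.F) (hv : v ∈ rf.F) :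
    u ⊔ v ∈ rf.F ∧ rf.E (u ⊔ v) (u ⊔ v) ≤ rf.E u u + rf.E v v := by
  have hw := sub_mem hu hv
  have hp := (posPart_mem_and_E_le hw).1
  have hn := negPart_mem hw
  have hsup : u ⊔ v = v + (u - v)⁺ := sup_eq_add_posPart_sub u v
  have hu' : u = v + (u - v)⁺ - (u - v)⁻ := by rw [add_sub_assoc, posPart_sub_negPart]; abel
  refine ⟨hsup ▸ rf.add_mem hv hp, ?_⟩
  have hcross := E_posPart_negPart_nonpos hw
  have hvn := rf.nonneg _ (sub_mem hv hn)
  rw [E_sub_sub hv hn] at hvn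
  have hEu : rf.E u u = rf.E (v + (u - v)⁺ - (u - v)⁻) (v + (u - v)⁺ - (u - v)⁻) := by
    rw [← hu']
  rw [E_sub_sub (rf.add_mem hv hp) hn, E_add_add hv hp, rf.add_left v hv _ hp _ hn] at hEu
  rw [hsup, E_add_add hv hp]
  linarith

end Lattice

section Sequences

variable {f : ℕ → X → ℝ}

theorem partialSups_mem_and_E_le (hf : ∀ n, f n ∈ rf.F) (N : ℕ) :
    partialSups f N ∈ rf.F ∧
      rf.E (partialSups f N) (partialSups f N) ≤ ∑ n ∈ Finset.range (N + 1), rf.E (f n) (f n) := by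
  induction N with
  | zero => simp [hf 0]
  | succ N ih =>
    obtain ⟨hmem, hle⟩ := sup_mem_and_E_le ih.1 (hf (N + 1))
    rw [partialSups_add_one, Finset.sum_range_succ]
    exact ⟨hmem, hle.trans (by linarith [ih.2])⟩

theorem bddAbove_range_apply (hf : ∀ n, f n ∈ rf.F) {S : ℝ} (hS : ∀ n, rf.E (f n) (f n) ≤ S)
    {x₀ : X} (hx₀ : BddAbove (range fun n => f n x₀)) (x : X) :
    BddAbove (range fun n => f n x) := by
  obtain ⟨b, hb⟩ := hx₀
  refine ⟨b + √(rf.rmetric x x₀ * S), ?_⟩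
  rintro _ ⟨n, rfl⟩
  have hdiff : |f n x - f n x₀| ≤ √(rf.rmetric x x₀ * S) :=
    Real.abs_le_sqrt ((sq_sub_le_rmetric_mul_E (hf n) x x₀).trans
      (mul_le_mul_of_nonneg_left (hS n) (rf.rmetric_nonneg x x₀)))
  linarith [le_abs_self (f n x - f n x₀), hb ⟨n, rfl⟩]

theorem iSup_mem_and_E_le (hf : ∀ n, f n ∈ rf.F) (hsum : Summable fun n => rf.E (f n) (f n))
    {x₀ : X} (hx₀ : BddAbove (range fun n => f n x₀)) :
    (∀ x, BddAbove (range fun n => f n x)) ∧ (fun x => ⨆ n, f n x) ∈ rf.F ∧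
      rf.E (fun x => ⨆ n, f n x) (fun x => ⨆ n, f n x) ≤ ∑' n, rf.E (f n) (f n) := by
  have hnonneg : ∀ n, 0 ≤ rf.E (f n) (f n) := fun n => rf.nonneg _ (hf n)
  have hbdd := bddAbove_range_apply hf (fun n => hsum.le_tsum n fun j _ => hnonneg j) hx₀
  refine ⟨hbdd, mem_F_and_E_le_of_tendsto (fun N => (partialSups_mem_and_E_le hf N).1)
    (fun N => (partialSups_mem_and_E_le hf N).2.trans (hsum.sum_le_tsum _ fun n _ => hnonneg n))
    fun x => ?_⟩
  simp only [Pi.partialSups_apply]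
  rw [← ciSup_partialSups_eq (hbdd x)]
  exact tendsto_atTop_ciSup (partialSups_monotone _) (bddAbove_range_partialSups.2 (hbdd x))

theorem iInf_mem_and_E_le (hf : ∀ n, f n ∈ rf.F) (hsum : Summable fun n => rf.E (f n) (f n))
    {x₀ : X} (hx₀ : BddBelow (range fun n => f n x₀)) :
    (∀ x, BddBelow (range fun n => f n x)) ∧ (fun x => ⨅ n, f n x) ∈ rf.F ∧
      rf.E (fun x => ⨅ n, f n x) (fun x => ⨅ n, f n x) ≤ ∑' n, rf.E (f n) (f n) := by
  have hE : ∀ n, rf.E (-f n) (-f n) = rf.E (f n) (f n) := fun n => E_neg_neg (hf n)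
  have hneg : ∀ x, range (fun n => -f n x) = -range fun n => f n x := fun x => by
    simp [← image_neg_eq_neg, ← range_comp, Function.comp_def]
  obtain ⟨hbdd, hmem, hle⟩ := iSup_mem_and_E_le (f := fun n => -f n) (fun n => neg_mem (hf n))
    (by simpa only [hE] using hsum) (by simpa only [Pi.neg_apply, hneg, bddAbove_neg] using hx₀)
  simp only [Pi.neg_apply, hE] at hbdd hmem hle
  have hinf : (fun x => ⨅ n, f n x) = -fun x => ⨆ n, -f n x := funext fun x => by
    simpa using (Real.iSup_mul_of_nonpos (r := -1) (by norm_num) fun n => -f n x).symm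
  rw [hinf, E_neg_neg hmem]
  exact ⟨fun x => by simpa only [hneg, bddAbove_neg] using hbdd x, neg_mem hmem, hle⟩

end Sequences

end ResistanceForm

theorem sup_inf_mem_of_summable_energy_general {X : Type*}
    (rf : ResistanceForm X)
    (f : ℕ → X → ℝ) (hf : ∀ n, f n ∈ rf.F)
    (hsum : Summable fun n => rf.E (f n) (f n)) :
    ((∃ x₀ : X, BddAbove (Set.range fun n => f n x₀)) →
      (∀ x : X, BddAbove (Set.range fun n => f n x)) ∧
      (fun x => ⨆ n, f n x) ∈ rf.F ∧
      rf.E (fun x => ⨆ n, f n x) (fun x => ⨆ n, f n x) ≤ ∑' n, rf.E (f n) (f n)) ∧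
    ((∃ x₀ : X, BddBelow (Set.range fun n => f n x₀)) →
      (∀ x : X, BddBelow (Set.range fun n => f n x)) ∧
      (fun x => ⨅ n, f n x) ∈ rf.F ∧
      rf.E (fun x => ⨅ n, f n x) (fun x => ⨅ n, f n x) ≤ ∑' n, rf.E (f n) (f n)) :=
  ⟨fun ⟨_, hx₀⟩ => ResistanceForm.iSup_mem_and_E_le hf hsum hx₀,
    fun ⟨_, hx₀⟩ => ResistanceForm.iInf_mem_and_E_le hf hsum hx₀⟩

/-- Let `(E,F)` be a resistance form whose resistance metric `R` is
complete, doubling and uniformly perfect, and let `{f_n} ⊆ F` with `∑ E(f_n,f_n) < ∞`.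
(1) If `sup_n f_n(x*) < ∞` for some `x*`, then `f̄ = sup_n f_n` is finite everywhere,
belongs to `F`, and `E(f̄,f̄) ≤ ∑ E(f_n,f_n)`.
(2) Dually for the pointwise infimum. -/
theorem sup_inf_mem_of_summable_energy {X : Type*} [MetricSpace X] [CompleteSpace X]
    (rf : ResistanceForm X) (hR : ∀ x y : X, dist x y = rf.rmetric x y)
    (hdb : DoublingOf fun x y : X => dist x y)
    (hup : UniformlyPerfectOf fun x y : X => dist x y)
    (f : ℕ → X → ℝ) (hf : ∀ n, f n ∈ rf.F)
    (hsum : Summable fun n => rf.E (f n) (f n)) :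
    ((∃ x₀ : X, BddAbove (Set.range fun n => f n x₀)) →
      (∀ x : X, BddAbove (Set.range fun n => f n x)) ∧
      (fun x => ⨆ n, f n x) ∈ rf.F ∧
      rf.E (fun x => ⨆ n, f n x) (fun x => ⨆ n, f n x) ≤ ∑' n, rf.E (f n) (f n)) ∧
    ((∃ x₀ : X, BddBelow (Set.range fun n => f n x₀)) →
      (∀ x : X, BddBelow (Set.range fun n => f n x)) ∧
      (fun x => ⨅ n, f n x) ∈ rf.F ∧
      rf.E (fun x => ⨅ n, f n x) (fun x => ⨅ n, f n x) ≤ ∑' n, rf.E (f n) (f n)) :=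
  sup_inf_mem_of_summable_energy_general rf f hf hsum
end

section
/- Let (Y,ρ) be a uniformly perfect metric space and let μ be a Borel measure on Y with the volume doubling property with respect to ρ. Then there exists γ₁ > 1 such that μ(B_ρ(x, r/γ₁)) ≤ μ(B_ρ(x,r))/2 for every x ∈ Y and every r ∈ (0, diam(Y,ρ)). -/
open Filter Set Metric
open scoped ENNReal Topology

/-- A measure `μ` on a (pseudo)metric space has the volume doubling property:
there is `C > 1` with `0 < μ(B(x,2r)) ≤ C · μ(B(x,r)) < ∞` for all `x` and `r > 0`. -/
def VolumeDoubling {Y : Type*} [PseudoMetricSpace Y] [MeasurableSpace Y] (μ : MeasureTheory.Measure Y) : Prop :=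
  ∃ C : ℝ≥0∞, 1 < C ∧ C ≠ ⊤ ∧ ∀ (x : Y) (r : ℝ), 0 < r →
    0 < μ (Metric.ball x (2 * r)) ∧
    μ (Metric.ball x (2 * r)) ≤ C * μ (Metric.ball x r) ∧
    μ (Metric.ball x r) < ⊤

/-!
A ball `B(x, r)` with `r` below the diameter is not the whole space, so uniform perfectness (with
constant `γ`) gives a point `y` with `r / (2γ) ≤ d(x, y) < r / 2`. For `ρ = r / (4γ)` the balls
`B(x, ρ)` and `B(y, ρ)` are disjoint and lie in `B(x, r)`, while `B(x, r) ⊆ B(y, 2ᵏ ρ)` once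
`2ᵏ > 8γ`, so doubling gives `μ(B(x, r)) ≤ Cᵏ μ(B(y, ρ))` and hence
`μ(B(x, ρ)) ≤ (1 - C⁻ᵏ) μ(B(x, r))`. Iterating this `m` times with `(1 - C⁻ᵏ)ᵐ < 1/2` gives
`γ₁ = (4γ)ᵐ`.
-/

open MeasureTheory

theorem measure_le_one_sub_inv_mul_of_disjoint {α : Type*} [MeasurableSpace α] {μ : Measure α}
    {A B S : Set α} {K : ℝ≥0∞} (hA : A ⊆ S) (hB : B ⊆ S) (hAB : Disjoint A B)
    (hBm : MeasurableSet B) (hS : μ S ≠ ⊤) (hK : μ S ≤ μ B * K) :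
    μ A ≤ (1 - K⁻¹) * μ S := by
  have hBK : μ S / K ≤ μ B := ENNReal.div_le_of_le_mul hK
  have hsum : μ A + μ S / K ≤ μ S :=
    calc μ A + μ S / K ≤ μ A + μ B := by gcongr
      _ = μ (A ∪ B) := (measure_union hAB hBm).symm
      _ ≤ μ S := measure_mono (union_subset hA hB)
  rw [ENNReal.sub_mul fun _ _ => hS, one_mul, ← ENNReal.div_eq_inv_mul]
  exact ENNReal.le_sub_of_add_le_right (ne_top_of_le_ne_top hS (hBK.trans (measure_mono hB))) hsum

section PseudoMetric

variable {Y : Type*} [PseudoMetricSpace Y]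

theorem ball_ne_univ_of_ofReal_two_mul_lt_ediam {x : Y} {s : ℝ}
    (hs : ENNReal.ofReal (2 * s) < ediam (univ : Set Y)) : ball x s ≠ univ := by
  intro h
  have hle : ediam (univ : Set Y) ≤ ENNReal.ofReal (2 * s) := by
    rw [← h, ← Metric.eball_ofReal, ENNReal.ofReal_mul zero_le_two, ENNReal.ofReal_ofNat]
    exact Metric.ediam_eball_le
  exact hle.not_gt hs

theorem exists_le_dist_lt_mul {γ : ℝ}
    (hγ : ∀ (x : Y) (r : ℝ), 0 < r → {y : Y | dist x y < r} ≠ univ →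
      ({y : Y | dist x y < γ * r} \ {y : Y | dist x y < r}).Nonempty)
    {x : Y} {s : ℝ} (hs : 0 < s) (hdiam : ENNReal.ofReal (2 * s) < ediam (univ : Set Y)) :
    ∃ y, s ≤ dist x y ∧ dist x y < γ * s := by
  have hball : {y : Y | dist x y < s} ≠ univ := by
    simpa only [Metric.ball, dist_comm] using ball_ne_univ_of_ofReal_two_mul_lt_ediam (x := x) hdiam
  obtain ⟨y, hy_lt, hy_le⟩ := hγ x s hs hball
  exact ⟨y, not_lt.1 hy_le, hy_lt⟩

variable [MeasurableSpace Y] {μ : Measure Y}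

theorem measure_ball_two_pow_mul_le {C : ℝ≥0∞}
    (hC : ∀ (x : Y) (r : ℝ), 0 < r → μ (ball x (2 * r)) ≤ C * μ (ball x r))
    (n : ℕ) (x : Y) {r : ℝ} (hr : 0 < r) : μ (ball x (2 ^ n * r)) ≤ C ^ n * μ (ball x r) := by
  induction n with
  | zero => simp
  | succ n ih =>
    calc μ (ball x (2 ^ (n + 1) * r)) = μ (ball x (2 * (2 ^ n * r))) := by rw [pow_succ']; ring_nf
      _ ≤ C * μ (ball x (2 ^ n * r)) := hC x _ (by positivity)
      _ ≤ C * (C ^ n * μ (ball x r)) := by gcongr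
      _ = C ^ (n + 1) * μ (ball x r) := by rw [pow_succ']; ring

theorem measure_ball_div_pow_le_pow_mul {a : ℝ} (ha : 1 ≤ a) {q : ℝ≥0∞}
    (hq : ∀ (x : Y) (r : ℝ), 0 < r → ENNReal.ofReal r < ediam (univ : Set Y) →
      μ (ball x (r / a)) ≤ q * μ (ball x r))
    (m : ℕ) (x : Y) {r : ℝ} (hr : 0 < r) (hdiam : ENNReal.ofReal r < ediam (univ : Set Y)) :
    μ (ball x (r / a ^ m)) ≤ q ^ m * μ (ball x r) := by
  induction m generalizing r with
  | zero => simp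
  | succ m ih =>
    have ha₀ : 0 < a := zero_lt_one.trans_le ha
    have hdiam' : ENNReal.ofReal (r / a) < ediam (univ : Set Y) :=
      (ENNReal.ofReal_le_ofReal (div_le_self hr.le ha)).trans_lt hdiam
    calc μ (ball x (r / a ^ (m + 1))) = μ (ball x (r / a / a ^ m)) := by
          rw [div_div, pow_succ']
      _ ≤ q ^ m * μ (ball x (r / a)) := ih (div_pos hr ha₀) hdiam'
      _ ≤ q ^ m * (q * μ (ball x r)) := by gcongr; exact hq x r hr hdiam
      _ = q ^ (m + 1) * μ (ball x r) := by rw [pow_succ]; ring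

variable [OpensMeasurableSpace Y]

theorem measure_ball_le_one_sub_inv_pow_mul {C : ℝ≥0∞}
    (hC : ∀ (x : Y) (r : ℝ), 0 < r → μ (ball x (2 * r)) ≤ C * μ (ball x r))
    {x y : Y} {ρ r : ℝ} (hfin : μ (ball x r) ≠ ⊤) (hρ : 0 < ρ) (hxy : 2 * ρ ≤ dist x y)
    (hyr : ρ + dist x y ≤ r) {k : ℕ} (hk : r + dist x y ≤ 2 ^ k * ρ) :
    μ (ball x ρ) ≤ (1 - (C ^ k)⁻¹) * μ (ball x r) := by
  refine measure_le_one_sub_inv_mul_of_disjoint (ball_subset_ball (by linarith))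
    (ball_subset_ball' (by rwa [dist_comm])) (ball_disjoint_ball (by linarith)) measurableSet_ball
    hfin ?_
  calc μ (ball x r) ≤ μ (ball y (2 ^ k * ρ)) := measure_mono (ball_subset_ball' hk)
    _ ≤ C ^ k * μ (ball y ρ) := measure_ball_two_pow_mul_le hC k y hρ
    _ = μ (ball y ρ) * C ^ k := mul_comm _ _

theorem exists_measure_ball_div_le_mul (hup : UniformlyPerfectOf fun x y : Y => dist x y)
    (hvd : VolumeDoubling μ) :
    ∃ a : ℝ, 1 < a ∧ ∃ q < 1, ∀ (x : Y) (r : ℝ), 0 < r →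
      ENNReal.ofReal r < ediam (univ : Set Y) → μ (ball x (r / a)) ≤ q * μ (ball x r) := by
  obtain ⟨γ, hγ, hperf⟩ := hup
  obtain ⟨C, -, hCtop, hvd⟩ := hvd
  obtain ⟨k, hk⟩ : ∃ k : ℕ, 8 * γ < 2 ^ k := pow_unbounded_of_one_lt _ one_lt_two
  have hγ₀ : 0 < γ := zero_lt_one.trans hγ
  refine ⟨4 * γ, by linarith, 1 - (C ^ k)⁻¹, ?_, fun x r hr hdiam => ?_⟩
  · exact ENNReal.sub_lt_self ENNReal.one_ne_top one_ne_zero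
      (ENNReal.inv_ne_zero.2 (ENNReal.pow_ne_top hCtop))
  set ρ := r / (4 * γ)
  have hρ : 0 < ρ := by positivity
  have hr_eq : r = 4 * γ * ρ := by simp only [ρ]; field_simp
  have h4ρ : ENNReal.ofReal (2 * (2 * ρ)) < ediam (univ : Set Y) :=
    (ENNReal.ofReal_le_ofReal (by nlinarith)).trans_lt hdiam
  obtain ⟨y, hxy, hyx⟩ := exists_le_dist_lt_mul hperf (by positivity) h4ρ
  exact measure_ball_le_one_sub_inv_pow_mul (fun x r hr => (hvd x r hr).2.1) (hvd x r hr).2.2.ne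
    hρ hxy (by nlinarith) (by nlinarith)

end PseudoMetric

/-- (Reverse volume doubling.)  Let `(Y,ρ)` be a uniformly perfect metric
space and `μ` a Borel measure with the volume doubling property.  Then there is `γ₁ > 1`
such that `μ(B(x, r/γ₁)) ≤ μ(B(x,r))/2` for every `x ∈ Y` and `r ∈ (0, diam(Y,ρ))`. -/
theorem reverse_volume_doubling {Y : Type*} [MetricSpace Y] [MeasurableSpace Y]
    [BorelSpace Y]
    (hup : UniformlyPerfectOf fun x y : Y => dist x y)
    (μ : MeasureTheory.Measure Y) (hvd : VolumeDoubling μ) :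
    ∃ γ₁ : ℝ, 1 < γ₁ ∧ ∀ (x : Y) (r : ℝ), 0 < r →
      ENNReal.ofReal r < EMetric.diam (Set.univ : Set Y) →
      μ (Metric.ball x (r / γ₁)) ≤ μ (Metric.ball x r) / 2 := by
  obtain ⟨a, ha, q, hq, hcontract⟩ := exists_measure_ball_div_le_mul hup hvd
  obtain ⟨m, hm⟩ : ∃ m : ℕ, q ^ m < 2⁻¹ :=
    ((ENNReal.tendsto_pow_atTop_nhds_zero_of_lt_one hq).eventually
      (gt_mem_nhds (ENNReal.inv_pos.2 ENNReal.ofNat_ne_top))).exists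
  have hm₀ : m ≠ 0 := by
    rintro rfl
    norm_num at hm
  refine ⟨a ^ m, one_lt_pow₀ ha hm₀, fun x r hr hdiam => ?_⟩
  calc μ (ball x (r / a ^ m)) ≤ q ^ m * μ (ball x r) :=
        measure_ball_div_pow_le_pow_mul ha.le hcontract m x hr hdiam
    _ ≤ 2⁻¹ * μ (ball x r) := by gcongr
    _ = μ (ball x r) / 2 := (ENNReal.div_eq_inv_mul).symm
end
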